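/- Let G = (V, E) be a finite undirected graph and let r₁, …, r_k be a sequence of contraction maps (each r_i maps every vertex of the current graph G_{i-1} into its own closed neighbourhood in G_{i-1}, and G_i is the resulting contracted graph). If the final graph G_k has no edges, then for all u, v ∈ V: u and v are in the same connected component of G if and only if (r_k ∘ r_{k-1} ∘ ⋯ ∘ r_1)(u) = (r_k ∘ ⋯ ∘ r_1)(v). -/

import Mathlib

/-- The contracted graph: edges join distinct representatives of adjacent vertices. -/
def contractedGraph {V : Type*} (G : SimpleGraph V) (r : V → V) : SimpleGraph V where
  Adj a b := a ≠ b ∧ ∃ v w : V, G.Adj v w ∧ r v = a ∧ r w = b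
  symm := by
    constructor
    rintro a b ⟨hab, v, w, hvw, hv, hw⟩
    exact ⟨hab.symm, w, v, hvw.symm, hw, hv⟩
  loopless := by constructor; rintro a ⟨h, -⟩; exact h rfl

/-- `iterGraph G r i` is the graph obtained from `G` after `i` contraction steps with
representative maps `r 0, r 1, …`. -/
def iterGraph {V : Type*} (G : SimpleGraph V) (r : ℕ → V → V) : ℕ → SimpleGraph V
  | 0 => G
  | i + 1 => contractedGraph (iterGraph G r i) (r i)

/-- `compMap r i` is the composition `r (i-1) ∘ ⋯ ∘ r 0`. -/
def compMap {V : Type*} (r : ℕ → V → V) : ℕ → V → V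
  | 0 => id
  | i + 1 => r i ∘ compMap r i

/-!
Each contraction step moves every vertex to a vertex it can reach, and an edge of the
contracted graph joins the images of two adjacent vertices; hence `r` identifies the
components of the contracted graph with those of the old one. Iterating, the components of
`G` correspond to those of `G_k`, which, having no edges, are single vertices.
-/

open SimpleGraph Relation

section

variable {V : Type*} {G : SimpleGraph V}

theorem contractedGraph_reachable_map (r : V → V) {a b : V}
    (h : G.Reachable a b) : (contractedGraph G r).Reachable (r a) (r b) := by
  rw [reachable_iff_reflTransGen] at h ⊢
  refine ReflTransGen.lift' r (fun c d hcd => show ReflTransGen _ (r c) (r d) from ?_) _ _ h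
  by_cases hrcd : r c = r d
  · exact hrcd ▸ ReflTransGen.refl
  · exact ReflTransGen.single ⟨hrcd, c, d, hcd, rfl, rfl⟩

theorem reachable_of_contractedGraph_reachable {r : V → V}
    (hr : ∀ v, G.Reachable v (r v)) {a b : V} (h : (contractedGraph G r).Reachable a b) :
    G.Reachable a b := by
  rw [reachable_iff_reflTransGen] at h ⊢
  refine reflTransGen_closed (fun c d hcd => ?_) _ _ h
  obtain ⟨-, v, w, hvw, rfl, rfl⟩ := hcd
  rw [← reachable_iff_reflTransGen]
  exact (hr v).symm.trans (hvw.reachable.trans (hr w))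

theorem contractedGraph_reachable_map_iff {r : V → V}
    (hr : ∀ v, G.Reachable v (r v)) {a b : V} :
    (contractedGraph G r).Reachable (r a) (r b) ↔ G.Reachable a b :=
  ⟨fun h => (hr a).trans ((reachable_of_contractedGraph_reachable hr h).trans (hr b).symm),
    contractedGraph_reachable_map r⟩

theorem iterGraph_reachable_compMap_iff {r : ℕ → V → V}
    {k : ℕ} (hr : ∀ i < k, ∀ v, (iterGraph G r i).Reachable v (r i v)) {u v : V} :
    (iterGraph G r k).Reachable (compMap r k u) (compMap r k v) ↔ G.Reachable u v := by
  induction k with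
  | zero => rfl
  | succ k ih =>
    rw [← ih fun i hi => hr i (hi.trans k.lt_succ_self)]
    exact contractedGraph_reachable_map_iff (hr k k.lt_succ_self)

end

theorem stmt_9_general {V : Type*} (G : SimpleGraph V) (r : ℕ → V → V) (k : ℕ)
    (hr : ∀ i < k, ∀ v : V, r i v = v ∨ (iterGraph G r i).Adj v (r i v))
    (hfinal : ∀ a b : V, ¬ (iterGraph G r k).Adj a b) :
    ∀ u v : V, G.Reachable u v ↔ compMap r k u = compMap r k v := by
  intro u v
  have hreach : ∀ i < k, ∀ w, (iterGraph G r i).Reachable w (r i w) := fun i hi w =>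
    (hr i hi w).elim (fun h => by rw [h]) Adj.reachable
  rw [← iterGraph_reachable_compMap_iff hreach, eq_bot_iff_forall_not_adj.mpr hfinal,
    reachable_bot]

/-- Iterated contraction: if each `r i` maps every vertex into its closed neighbourhood
in the current graph `G_i`, and the final graph `G_k` has no edges, then two vertices
are in the same connected component of `G` iff their images under the composition
`r_{k-1} ∘ ⋯ ∘ r_0` coincide. -/
theorem stmt_9 {V : Type*} [Fintype V] (G : SimpleGraph V) (r : ℕ → V → V) (k : ℕ)
    (hr : ∀ i < k, ∀ v : V, r i v = v ∨ (iterGraph G r i).Adj v (r i v))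
    (hfinal : ∀ a b : V, ¬ (iterGraph G r k).Adj a b) :
    ∀ u v : V, G.Reachable u v ↔ compMap r k u = compMap r k v :=
  stmt_9_general G r k hr hfinal
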